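/- arXiv:2509.05439 — 7 statements merged into one kernel-verified Lean document; each statement's English description precedes it below -/
import Mathlib

section
/- Let m ≥ 2, let γ, u ∈ ℝ, let k ≥ 0 and θ ∈ [0, 2π), and set 𝐤 = (k cos θ, k sin θ). Then U(θ)* Ĥ(𝐤; γ, u) U(θ) = Ĥ(k; γ, u), i.e., the bulk Hamiltonian at any wavevector 𝐤 of modulus k is unitarily conjugate, via the explicit diagonal unitary U(θ), to the bulk Hamiltonian at the real wavevector (k, 0). -/
/-!
Conjugating by the diagonal unitary `U(θ) = diag(e^{iθ n_p})`, `n_p = ⌊(p+1)/2⌋`, multiplies the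
`(p, q)` entry by `e^{iθ(n_q - n_p)}`. This phase is `1` on the diagonal and on the `γ`-couplings,
which join positions with equal `n`, while on the intra-layer entries `k e^{∓iθ}` it is `e^{±iθ}`,
turning them into `k`.
-/

open Matrix Complex

/-- Potential at layer `j` (1-indexed, `1 ≤ j ≤ m`): `u_j = (u/(m−1))·(j − (m+1)/2)`. -/
noncomputable def layerPot (m : ℕ) (u : ℝ) (j : ℕ) : ℝ :=
  (u / ((m : ℝ) - 1)) * ((j : ℝ) - ((m : ℝ) + 1) / 2)

/-- The `2m×2m` bulk Hamiltonian symbol `Ĥ(𝐤; γ, u)`: block-tridiagonal, with `j`-th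
diagonal `2×2` block `u_j I₂ + kx σ₁ + ky σ₂`, superdiagonal blocks `γA` and
subdiagonal blocks `γA*`, where `A = [[0,0],[1,0]]`. -/
noncomputable def Hbulk (m : ℕ) (γ u kx ky : ℝ) :
    Matrix (Fin (2 * m)) (Fin (2 * m)) ℂ :=
  Matrix.of fun i j =>
    if (i : ℕ) = (j : ℕ) then ((layerPot m u ((i : ℕ) / 2 + 1) : ℝ) : ℂ)
    else if (i : ℕ) + 1 = (j : ℕ) then
      (if (i : ℕ) % 2 = 0 then ((kx : ℂ) - (ky : ℂ) * Complex.I) else ((γ : ℝ) : ℂ))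
    else if (j : ℕ) + 1 = (i : ℕ) then
      (if (j : ℕ) % 2 = 0 then ((kx : ℂ) + (ky : ℂ) * Complex.I) else ((γ : ℝ) : ℂ))
    else 0

/-- The diagonal unitary `U(θ) = diag(1, e^{iθ}, e^{iθ}, e^{2iθ}, …, e^{i(m−1)θ}, e^{imθ})`:
its `p`-th diagonal entry (0-indexed) is `e^{i⌊(p+1)/2⌋θ}`. -/
noncomputable def Umat (m : ℕ) (θ : ℝ) : Matrix (Fin (2 * m)) (Fin (2 * m)) ℂ :=
  Matrix.diagonal fun i => Complex.exp (Complex.I * (θ : ℂ) * ((((i : ℕ) + 1) / 2 : ℕ) : ℂ))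

theorem conjTranspose_diagonal_mul_mul_diagonal {ι α : Type*} [Fintype ι] [DecidableEq ι]
    [Semiring α] [StarRing α] (d : ι → α) (H : Matrix ι ι α) :
    (diagonal d)ᴴ * H * diagonal d = of fun i j => star (d i) * H i j * d j := by
  ext i j
  simp [diagonal_conjTranspose, mul_diagonal, diagonal_mul]

theorem star_exp_mul_mul_exp (θ a b : ℝ) (c : ℂ) :
    star (exp (I * θ * a)) * c * exp (I * θ * b) = exp (I * θ * (b - a)) * c := by
  rw [star_def, ← exp_conj, mul_comm, ← mul_assoc, ← exp_add]
  simp only [map_mul, conj_I, conj_ofReal]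
  ring_nf

theorem exp_mul_ofReal_cos_sub_sin (k θ : ℝ) :
    exp (I * θ) * ((k * Real.cos θ : ℝ) - (k * Real.sin θ : ℝ) * I) = k := by
  rw [mul_comm I, exp_mul_I]
  push_cast
  linear_combination (k : ℂ) * sin_sq_add_cos_sq (θ : ℂ) - (k * sin (θ : ℂ) ^ 2) * I_sq

theorem exp_neg_mul_ofReal_cos_add_sin (k θ : ℝ) :
    exp (I * (-θ : ℝ)) * ((k * Real.cos θ : ℝ) + (k * Real.sin θ : ℝ) * I) = k := by
  rw [mul_comm I, exp_mul_I]
  push_cast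
  rw [cos_neg, sin_neg]
  linear_combination (k : ℂ) * sin_sq_add_cos_sq (θ : ℂ) - (k * sin (θ : ℂ) ^ 2) * I_sq

theorem rotation_conjugation_general (m : ℕ) (γ u : ℝ) (k θ : ℝ) :
    (Umat m θ)ᴴ * Hbulk m γ u (k * Real.cos θ) (k * Real.sin θ) * Umat m θ
      = Hbulk m γ u k 0 := by
  rw [Umat, conjTranspose_diagonal_mul_mul_diagonal]
  ext i j
  simp only [of_apply, ← ofReal_natCast, star_exp_mul_mul_exp, Hbulk]
  split_ifs with hij hup hi hdown hj
  · rw [hij, sub_self, mul_zero, exp_zero, one_mul]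
  · rw [show ((j : ℕ) + 1) / 2 = ((i : ℕ) + 1) / 2 + 1 by omega]
    simpa using exp_mul_ofReal_cos_sub_sin k θ
  · rw [show ((j : ℕ) + 1) / 2 = ((i : ℕ) + 1) / 2 by omega]
    simp
  · rw [show ((i : ℕ) + 1) / 2 = ((j : ℕ) + 1) / 2 + 1 by omega]
    simpa using exp_neg_mul_ofReal_cos_add_sin k θ
  · rw [show ((i : ℕ) + 1) / 2 = ((j : ℕ) + 1) / 2 by omega]
    simp
  · exact mul_zero _

/-- for `k ≥ 0`, `θ ∈ [0, 2π)` and `𝐤 = (k cos θ, k sin θ)`,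
`U(θ)* Ĥ(𝐤; γ, u) U(θ) = Ĥ((k,0); γ, u)`. -/
theorem rotation_conjugation (m : ℕ) (hm : 2 ≤ m) (γ u : ℝ) (k θ : ℝ)
    (hk : 0 ≤ k) (hθ0 : 0 ≤ θ) (hθ1 : θ < 2 * Real.pi) :
    (Umat m θ)ᴴ * Hbulk m γ u (k * Real.cos θ) (k * Real.sin θ) * Umat m θ
      = Hbulk m γ u k 0 :=
  rotation_conjugation_general m γ u k θ
end

section
/- Let m ≥ 2 and let γ, u, k ∈ ℝ. Then G₁ Ĥ(k; γ, u) G₁ = Ĥ(k; γ, −u): conjugation by the block-antidiagonal matrix G₁ reverses the sign of the displacement potential u in the bulk Hamiltonian. -/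
open Matrix Complex

/-- The block-antidiagonal matrix `G₁`: the `2×2` block in block-position
`(b, m−1−b)` (0-indexed blocks) is `σ₁`, all other blocks vanish. -/
def G1mat (m : ℕ) : Matrix (Fin (2 * m)) (Fin (2 * m)) ℂ :=
  Matrix.of fun i j =>
    if (i : ℕ) / 2 + (j : ℕ) / 2 = m - 1 ∧ (i : ℕ) % 2 ≠ (j : ℕ) % 2 then 1 else 0

/-- Index reversal `i ↦ 2m−1−i`. -/
def revIdx (m : ℕ) (i : Fin (2 * m)) : Fin (2 * m) :=
  ⟨2 * m - 1 - (i : ℕ), by have := i.isLt; omega⟩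

lemma revIdx_val (m : ℕ) (i : Fin (2 * m)) : ((revIdx m i : Fin (2 * m)) : ℕ) = 2 * m - 1 - (i : ℕ) := rfl

lemma G1_apply (m : ℕ) (i j : Fin (2 * m)) :
    G1mat m i j = if (i : ℕ) + (j : ℕ) = 2 * m - 1 then 1 else 0 := by
  have hi := i.isLt
  have hj := j.isLt
  simp only [G1mat, of_apply]
  split_ifs with h1 h2 <;> first | rfl | (exfalso; omega)

lemma G1_mul_apply (m : ℕ) (M : Matrix (Fin (2 * m)) (Fin (2 * m)) ℂ) (i j : Fin (2 * m)) :
    (G1mat m * M) i j = M (revIdx m i) j := by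
  rw [Matrix.mul_apply, Finset.sum_eq_single (revIdx m i)]
  · rw [G1_apply, if_pos (by rw [revIdx_val]; have := i.isLt; omega), one_mul]
  · intro b _ hb
    rw [G1_apply, if_neg, zero_mul]
    intro h
    exact hb (Fin.ext (by rw [revIdx_val]; have := i.isLt; have := b.isLt; omega))
  · intro h; exact absurd (Finset.mem_univ _) h

lemma mul_G1_apply (m : ℕ) (M : Matrix (Fin (2 * m)) (Fin (2 * m)) ℂ) (i j : Fin (2 * m)) :
    (M * G1mat m) i j = M i (revIdx m j) := by
  rw [Matrix.mul_apply, Finset.sum_eq_single (revIdx m j)]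
  · rw [G1_apply, if_pos (by rw [revIdx_val]; have := j.isLt; omega), mul_one]
  · intro b _ hb
    rw [G1_apply, if_neg, mul_zero]
    intro h
    exact hb (Fin.ext (by rw [revIdx_val]; have := j.isLt; have := b.isLt; omega))
  · intro h; exact absurd (Finset.mem_univ _) h

lemma layerPot_flip (m : ℕ) (u : ℝ) (q : ℕ) (hq : q < m) :
    layerPot m u (m - 1 - q + 1) = layerPot m (-u) (q + 1) := by
  unfold layerPot
  have h1 : m - 1 - q + 1 = m - q := by omega
  rw [h1]
  have h2 : ((m - q : ℕ) : ℝ) = (m : ℝ) - (q : ℝ) := by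
    rw [Nat.cast_sub (by omega)]
  rw [h2]
  push_cast
  ring

lemma Hbulk_rev (m : ℕ) (γ u k : ℝ) (i j : Fin (2 * m)) :
    Hbulk m γ u k 0 (revIdx m i) (revIdx m j) = Hbulk m γ (-u) k 0 i j := by
  have hi := i.isLt
  have hj := j.isLt
  simp only [Hbulk, of_apply]
  rw [revIdx_val, revIdx_val]
  by_cases h1 : (i : ℕ) = (j : ℕ)
  · rw [if_pos (by omega : 2 * m - 1 - (i : ℕ) = 2 * m - 1 - (j : ℕ)), if_pos h1]
    have hq : (2 * m - 1 - (i : ℕ)) / 2 = m - 1 - (i : ℕ) / 2 := by omega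
    rw [hq, layerPot_flip m u ((i : ℕ) / 2) (by omega)]
  · rw [if_neg (by omega : ¬ 2 * m - 1 - (i : ℕ) = 2 * m - 1 - (j : ℕ)), if_neg h1]
    by_cases h2 : (i : ℕ) + 1 = (j : ℕ)
    · rw [if_neg (by omega : ¬ 2 * m - 1 - (i : ℕ) + 1 = 2 * m - 1 - (j : ℕ)),
        if_pos (by omega : 2 * m - 1 - (j : ℕ) + 1 = 2 * m - 1 - (i : ℕ)), if_pos h2]
      have hpar : (2 * m - 1 - (j : ℕ)) % 2 = 0 ↔ (i : ℕ) % 2 = 0 := by omega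
      by_cases hp : (i : ℕ) % 2 = 0
      · rw [if_pos (hpar.mpr hp), if_pos hp]; push_cast; ring
      · rw [if_neg (fun h => hp (hpar.mp h)), if_neg hp]
    · by_cases h3 : (j : ℕ) + 1 = (i : ℕ)
      · rw [if_pos (by omega : 2 * m - 1 - (i : ℕ) + 1 = 2 * m - 1 - (j : ℕ)),
          if_neg h2, if_pos h3]
        have hpar : (2 * m - 1 - (i : ℕ)) % 2 = 0 ↔ (j : ℕ) % 2 = 0 := by omega
        by_cases hp : (j : ℕ) % 2 = 0
        · rw [if_pos (hpar.mpr hp), if_pos hp]; push_cast; ring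
        · rw [if_neg (fun h => hp (hpar.mp h)), if_neg hp]
      · rw [if_neg (by omega : ¬ 2 * m - 1 - (i : ℕ) + 1 = 2 * m - 1 - (j : ℕ)),
          if_neg (by omega : ¬ 2 * m - 1 - (j : ℕ) + 1 = 2 * m - 1 - (i : ℕ)), if_neg h2, if_neg h3]

/-- `G₁ Ĥ(k; γ, u) G₁ = Ĥ(k; γ, −u)`. -/
theorem G1_conjugation (m : ℕ) (hm : 2 ≤ m) (γ u k : ℝ) :
    G1mat m * Hbulk m γ u k 0 * G1mat m = Hbulk m γ (-u) k 0 := by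
  ext i j
  rw [mul_G1_apply, G1_mul_apply, Hbulk_rev]
end

section
/- Let m ≥ 2 and let γ, u, k ∈ ℝ. Then G₁ Γ₃ (−Ĥ(k; γ, u)) Γ₃ G₁ = Ĥ(k; γ, u); i.e., the bulk Hamiltonian Ĥ(k;γ,u) satisfies a particle–hole symmetry: it is unitarily conjugate to its negative via the explicit unitary Γ₃ G₁. -/
open Matrix Complex

/-- `Γ₃ = I_m ⊗ σ₃`: block-diagonal with `σ₃` in every diagonal `2×2` block. -/
def Gamma3mat (m : ℕ) : Matrix (Fin (2 * m)) (Fin (2 * m)) ℂ :=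
  Matrix.diagonal fun i => if (i : ℕ) % 2 = 0 then 1 else -1

/-! `G₁` is the permutation matrix of the index reversal `i ↦ 2m - 1 - i`, so conjugating by it
reflects a matrix through its centre. As `2m` is even, the reversal flips the parity of every
index, whence the reflection of `Γ₃` is `-Γ₃`. It sends layer `j` to layer `m + 1 - j`, where the
potential has the opposite sign, and (for `k_y = 0`) leaves the real hopping entries unchanged;
since conjugation by `Γ₃` flips exactly the sign of the nearest-neighbour entries, the reflection
of `-Ĥ` is `Γ₃ Ĥ Γ₃`. With `Γ₃² = 1` the signs cancel. -/

lemma G1mat_eq_toMatrix_revPerm (m : ℕ) :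
    G1mat m = (Fin.revPerm : Equiv.Perm (Fin (2 * m))).toPEquiv.toMatrix := by
  ext i j
  have := i.isLt
  have := j.isLt
  simp only [G1mat, of_apply, PEquiv.toMatrix_apply, Equiv.toPEquiv_apply, Option.mem_def,
    Option.some.injEq, Fin.revPerm_apply, Fin.ext_iff, Fin.val_rev]
  congr 1
  apply propext
  omega

lemma G1mat_mul_mul_G1mat (m : ℕ) (M : Matrix (Fin (2 * m)) (Fin (2 * m)) ℂ) :
    G1mat m * M * G1mat m = M.submatrix Fin.revPerm Fin.revPerm := by
  rw [G1mat_eq_toMatrix_revPerm, PEquiv.toMatrix_toPEquiv_mul, PEquiv.mul_toMatrix_toPEquiv,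
    submatrix_submatrix, Fin.revPerm_symm]
  rfl

lemma Gamma3mat_mul_self (m : ℕ) : Gamma3mat m * Gamma3mat m = 1 := by
  rw [Gamma3mat, diagonal_mul_diagonal, ← diagonal_one]
  congr 1
  ext i
  split_ifs <;> norm_num

lemma Gamma3mat_submatrix_revPerm (m : ℕ) :
    (Gamma3mat m).submatrix Fin.revPerm Fin.revPerm = -Gamma3mat m := by
  rw [Gamma3mat, submatrix_diagonal_equiv, diagonal_neg]
  congr 1
  ext i
  have := i.isLt
  simp only [Function.comp_apply, Fin.revPerm_apply, Fin.val_rev]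
  split_ifs <;> first | omega | norm_num

lemma Gamma3mat_mul_mul_Gamma3mat_apply (m : ℕ) (M : Matrix (Fin (2 * m)) (Fin (2 * m)) ℂ)
    (i j : Fin (2 * m)) :
    (Gamma3mat m * M * Gamma3mat m) i j =
      (if (i : ℕ) % 2 = 0 then 1 else -1) * M i j * (if (j : ℕ) % 2 = 0 then 1 else -1) := by
  rw [Gamma3mat, mul_diagonal, diagonal_mul]

lemma layerPot_add_layerPot_of_add_eq (m : ℕ) (u : ℝ) {j j' : ℕ} (h : j + j' = m + 1) :
    layerPot m u j + layerPot m u j' = 0 := by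
  have h' : (j : ℝ) + j' = m + 1 := by exact_mod_cast h
  unfold layerPot
  linear_combination (u / ((m : ℝ) - 1)) * h'

lemma neg_Hbulk_submatrix_revPerm (m : ℕ) (γ u k : ℝ) :
    (-Hbulk m γ u k 0).submatrix Fin.revPerm Fin.revPerm =
      Gamma3mat m * Hbulk m γ u k 0 * Gamma3mat m := by
  have hpot (i : Fin (2 * m)) : ((layerPot m u ((2 * m - (i + 1)) / 2 + 1) : ℝ) : ℂ) =
      -layerPot m u (i / 2 + 1) := by
    have := layerPot_add_layerPot_of_add_eq m u (show (2 * m - (i + 1)) / 2 + 1 + (i / 2 + 1)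
      = m + 1 by omega)
    rw [eq_neg_iff_add_eq_zero]
    exact_mod_cast this
  ext i j
  have hi := i.isLt
  have hj := j.isLt
  rw [Gamma3mat_mul_mul_Gamma3mat_apply, submatrix_apply, neg_apply]
  simp only [Hbulk, of_apply, Fin.revPerm_apply, Fin.val_rev]
  split_ifs <;> first
    | omega
    | (push_cast; ring1)
    | (rw [hpot]; ring)

theorem particle_hole_symmetry_general (m : ℕ) (γ u k : ℝ) :
    G1mat m * Gamma3mat m * (-(Hbulk m γ u k 0)) * Gamma3mat m * G1mat m
      = Hbulk m γ u k 0 := by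
  calc G1mat m * Gamma3mat m * (-(Hbulk m γ u k 0)) * Gamma3mat m * G1mat m
      = G1mat m * (Gamma3mat m * (-(Hbulk m γ u k 0)) * Gamma3mat m) * G1mat m := by
        simp only [mul_assoc]
    _ = (Gamma3mat m).submatrix Fin.revPerm Fin.revPerm
          * (-(Hbulk m γ u k 0)).submatrix Fin.revPerm Fin.revPerm
          * (Gamma3mat m).submatrix Fin.revPerm Fin.revPerm := by
        rw [G1mat_mul_mul_G1mat, submatrix_mul_equiv, submatrix_mul_equiv]
    _ = Hbulk m γ u k 0 := by
        rw [neg_Hbulk_submatrix_revPerm, Gamma3mat_submatrix_revPerm]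
        simp only [neg_mul, mul_neg, neg_neg, ← mul_assoc, Gamma3mat_mul_self, one_mul]
        rw [mul_assoc, Gamma3mat_mul_self, mul_one]

/-- particle–hole symmetry: `G₁ Γ₃ (−Ĥ(k; γ, u)) Γ₃ G₁ = Ĥ(k; γ, u)`. -/
theorem particle_hole_symmetry (m : ℕ) (hm : 2 ≤ m) (γ u k : ℝ) :
    G1mat m * Gamma3mat m * (-(Hbulk m γ u k 0)) * Gamma3mat m * G1mat m
      = Hbulk m γ u k 0 :=
  particle_hole_symmetry_general m γ u k
end

section
/- Let m ≥ 2, let γ, u ∈ ℝ, and let 𝐤 ∈ ℝ². Then Ĥ(𝐤; γ, u) is unitarily equivalent to −Ĥ(𝐤; γ, u); consequently, if E₁(𝐤) ≤ E₂(𝐤) ≤ … ≤ E_{2m}(𝐤) denote the eigenvalues of Ĥ(𝐤; γ, u) listed with multiplicity, then E_{2m+1−j}(𝐤) = −E_j(𝐤) for every 1 ≤ j ≤ 2m (the spectrum, with multiplicity, is symmetric about 0). -/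
open Matrix Complex

namespace SpecSymAux

open Polynomial

noncomputable def sgnRev (n : ℕ) : Matrix (Fin n) (Fin n) ℂ :=
  Matrix.of fun i j => if j = Fin.rev i then ((-1 : ℂ)) ^ (i : ℕ) else 0

lemma star_sgnRev_apply {n : ℕ} (i j : Fin n) :
    star (sgnRev n) i j = if i = Fin.rev j then ((-1 : ℂ)) ^ (j : ℕ) else 0 := by
  simp [sgnRev, Matrix.star_apply, apply_ite (star : ℂ → ℂ), star_pow]

lemma mul_star_sgnRev {n : ℕ} (M : Matrix (Fin n) (Fin n) ℂ) :
    M * star (sgnRev n) = Matrix.of fun i j : Fin n => M i (Fin.rev j) * ((-1 : ℂ)) ^ (j : ℕ) := by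
  ext i j
  simp only [Matrix.mul_apply, star_sgnRev_apply, Matrix.of_apply, mul_ite, mul_zero]
  rw [Finset.sum_ite_eq' Finset.univ (Fin.rev j) (fun k => M i k * ((-1 : ℂ)) ^ (j : ℕ))]
  simp

lemma sgnRev_mul {n : ℕ} (M : Matrix (Fin n) (Fin n) ℂ) :
    sgnRev n * M = Matrix.of fun i j : Fin n => ((-1 : ℂ)) ^ (i : ℕ) * M (Fin.rev i) j := by
  ext i j
  simp only [Matrix.mul_apply, sgnRev, Matrix.of_apply, ite_mul, zero_mul]
  rw [Finset.sum_ite_eq' Finset.univ (Fin.rev i) (fun k => ((-1 : ℂ)) ^ (i : ℕ) * M k j)]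
  simp

lemma sgnRev_conj {n : ℕ} (M : Matrix (Fin n) (Fin n) ℂ) :
    sgnRev n * M * star (sgnRev n) =
      Matrix.of fun i j : Fin n => ((-1 : ℂ)) ^ ((i : ℕ) + (j : ℕ)) * M (Fin.rev i) (Fin.rev j) := by
  rw [sgnRev_mul, mul_star_sgnRev]
  ext i j
  simp only [Matrix.of_apply, pow_add]
  ring

lemma sgnRev_mul_star {n : ℕ} : sgnRev n * star (sgnRev n) = 1 := by
  ext i j
  rw [mul_star_sgnRev]
  simp only [Matrix.of_apply, sgnRev]
  by_cases h : i = j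
  · subst h
    rw [if_pos rfl, ← pow_add, Even.neg_one_pow ⟨(i : ℕ), rfl⟩, Matrix.one_apply_eq]
  · rw [if_neg (by simpa [Fin.rev_inj] using (Ne.symm h)), zero_mul,
      Matrix.one_apply_ne h]

lemma sgnRev_mem (n : ℕ) : sgnRev n ∈ Matrix.unitaryGroup (Fin n) ℂ :=
  Matrix.mem_unitaryGroup_iff.mpr sgnRev_mul_star

lemma star_sgnRev_mul {n : ℕ} : star (sgnRev n) * sgnRev n = 1 :=
  Matrix.mem_unitaryGroup_iff'.mp (sgnRev_mem n)

lemma conj_kplus (kx ky : ℝ) :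
    star ((kx : ℂ) + (ky : ℂ) * Complex.I) = (kx : ℂ) - (ky : ℂ) * Complex.I := by
  simp [Complex.ext_iff]

lemma conj_kminus (kx ky : ℝ) :
    star ((kx : ℂ) - (ky : ℂ) * Complex.I) = (kx : ℂ) + (ky : ℂ) * Complex.I := by
  simp [Complex.ext_iff]

lemma Hbulk_isHermitian (m : ℕ) (γ u kx ky : ℝ) : (Hbulk m γ u kx ky).IsHermitian := by
  rw [Matrix.IsHermitian]
  ext i j
  rw [Matrix.conjTranspose_apply]
  show star (Hbulk m γ u kx ky j i) = Hbulk m γ u kx ky i j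
  simp only [Hbulk, Matrix.of_apply]
  by_cases h1 : (i : ℕ) = (j : ℕ)
  · rw [if_pos h1.symm, if_pos h1, h1, Complex.star_def, Complex.conj_ofReal]
  · by_cases h2 : (i : ℕ) + 1 = (j : ℕ)
    · rw [if_neg (Ne.symm h1), if_neg (by omega), if_pos h2, if_neg h1, if_pos h2]
      by_cases hp : (i : ℕ) % 2 = 0
      · rw [if_pos hp, if_pos hp, conj_kplus]
      · rw [if_neg hp, if_neg hp, Complex.star_def, Complex.conj_ofReal]
    · by_cases h3 : (j : ℕ) + 1 = (i : ℕ)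
      · rw [if_neg (Ne.symm h1), if_pos h3, if_neg h1, if_neg h2, if_pos h3]
        by_cases hp : (j : ℕ) % 2 = 0
        · rw [if_pos hp, if_pos hp, conj_kminus]
        · rw [if_neg hp, if_neg hp, Complex.star_def, Complex.conj_ofReal]
      · rw [if_neg (Ne.symm h1), if_neg (by omega), if_neg (by omega),
          if_neg h1, if_neg h2, if_neg h3, star_zero]

lemma Hbulk_rev (m : ℕ) (γ u kx ky : ℝ) (i j : Fin (2 * m)) :
    ((-1 : ℂ)) ^ ((i : ℕ) + (j : ℕ)) *
        Hbulk m γ u kx ky (Fin.rev j) (Fin.rev i) = -(Hbulk m γ u kx ky i j) := by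
  have hi : (i : ℕ) < 2 * m := i.isLt
  have hj : (j : ℕ) < 2 * m := j.isLt
  simp only [Hbulk, Matrix.of_apply, Fin.val_rev]
  by_cases h1 : (i : ℕ) = (j : ℕ)
  · rw [if_pos h1, if_pos (show 2 * m - ((j : ℕ) + 1) = 2 * m - ((i : ℕ) + 1) by omega),
      show ((-1 : ℂ)) ^ ((i : ℕ) + (j : ℕ)) = 1 from by
        rw [← h1]; exact Even.neg_one_pow ⟨(i : ℕ), rfl⟩, one_mul, ← Complex.ofReal_neg,
      Complex.ofReal_inj]
    set a : ℕ := (2 * m - ((j : ℕ) + 1)) / 2 + 1 with ha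
    set b : ℕ := (i : ℕ) / 2 + 1 with hb
    have hsum : (a : ℝ) + (b : ℝ) = (m : ℝ) + 1 := by
      have : a + b = m + 1 := by omega
      exact_mod_cast congrArg (Nat.cast : ℕ → ℝ) this
    simp only [layerPot]
    linear_combination (u / ((m : ℝ) - 1)) * hsum
  · by_cases h2 : (i : ℕ) + 1 = (j : ℕ)
    · rw [if_neg (show ¬(2 * m - ((j : ℕ) + 1) = 2 * m - ((i : ℕ) + 1)) by omega),
        if_pos (show 2 * m - ((j : ℕ) + 1) + 1 = 2 * m - ((i : ℕ) + 1) by omega),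
        if_neg h1, if_pos h2,
        Odd.neg_one_pow ⟨(i : ℕ), by omega⟩]
      simp only [show (2 * m - ((j : ℕ) + 1)) % 2 = (i : ℕ) % 2 from by omega]
      ring
    · by_cases h3 : (j : ℕ) + 1 = (i : ℕ)
      · rw [if_neg (show ¬(2 * m - ((j : ℕ) + 1) = 2 * m - ((i : ℕ) + 1)) by omega),
          if_neg (show ¬(2 * m - ((j : ℕ) + 1) + 1 = 2 * m - ((i : ℕ) + 1)) by omega),
          if_pos (show 2 * m - ((i : ℕ) + 1) + 1 = 2 * m - ((j : ℕ) + 1) by omega),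
          if_neg h1, if_neg h2, if_pos h3,
          Odd.neg_one_pow ⟨(j : ℕ), by omega⟩]
        simp only [show (2 * m - ((i : ℕ) + 1)) % 2 = (j : ℕ) % 2 from by omega]
        ring
      · rw [if_neg (show ¬(2 * m - ((j : ℕ) + 1) = 2 * m - ((i : ℕ) + 1)) by omega),
          if_neg (show ¬(2 * m - ((j : ℕ) + 1) + 1 = 2 * m - ((i : ℕ) + 1)) by omega),
          if_neg (show ¬(2 * m - ((i : ℕ) + 1) + 1 = 2 * m - ((j : ℕ) + 1)) by omega),
          if_neg h1, if_neg h2, if_neg h3]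
        simp


lemma scalar_conj {N : Type*} [DecidableEq N] [Fintype N]
    (V : Matrix N N ℂ) (h : V * star V = 1) :
    V.map (Polynomial.C : ℂ →+* ℂ[X]) * Matrix.scalar N (X : ℂ[X]) *
      (star V).map (Polynomial.C : ℂ →+* ℂ[X]) = Matrix.scalar N (X : ℂ[X]) := by
  have h1 : (Matrix.scalar N (X : ℂ[X])) = (X : ℂ[X]) • (1 : Matrix N N ℂ[X]) := by
    rw [Matrix.scalar_apply, Matrix.smul_one_eq_diagonal]
  rw [h1, mul_smul_comm, smul_mul_assoc, Matrix.mul_one, ← Matrix.map_mul, h,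
    Matrix.map_one _ (map_zero _) (map_one _)]

lemma charpoly_unitary_conjugate {N : Type*} [DecidableEq N] [Fintype N]
    (M V : Matrix N N ℂ) (h : V * star V = 1) :
    (V * M * star V).charpoly = M.charpoly := by
  have key : charmatrix (V * M * star V) =
      V.map (Polynomial.C : ℂ →+* ℂ[X]) * charmatrix M *
        (star V).map (Polynomial.C : ℂ →+* ℂ[X]) := by
    simp only [charmatrix, RingHom.mapMatrix_apply]
    rw [mul_sub, sub_mul, scalar_conj V h, Matrix.map_mul, Matrix.map_mul]
  rw [Matrix.charpoly, Matrix.charpoly, key, Matrix.det_mul, Matrix.det_mul]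
  have hdet : (V.map (Polynomial.C : ℂ →+* ℂ[X])).det *
      ((star V).map (Polynomial.C : ℂ →+* ℂ[X])).det = 1 := by
    rw [← Matrix.det_mul, ← Matrix.map_mul, h, Matrix.map_one _ (map_zero _) (map_one _),
      Matrix.det_one]
  calc (V.map (Polynomial.C : ℂ →+* ℂ[X])).det * (charmatrix M).det *
        ((star V).map (Polynomial.C : ℂ →+* ℂ[X])).det
      = (V.map (Polynomial.C : ℂ →+* ℂ[X])).det *
          ((star V).map (Polynomial.C : ℂ →+* ℂ[X])).det * (charmatrix M).det := by ring
    _ = (charmatrix M).det := by rw [hdet, one_mul]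

lemma charpoly_transpose' {N : Type*} [DecidableEq N] [Fintype N] (M : Matrix N N ℂ) :
    (Mᵀ).charpoly = M.charpoly := by
  have : charmatrix (Mᵀ) = (charmatrix M)ᵀ := by
    ext i j
    by_cases h : i = j
    · subst h; simp [charmatrix_apply]
    · simp [charmatrix_apply, Matrix.diagonal_apply_ne _ h,
        Matrix.diagonal_apply_ne _ (Ne.symm h), Matrix.transpose_apply]
  rw [Matrix.charpoly, Matrix.charpoly, this, Matrix.det_transpose]

lemma charpoly_neg_even {N : Type*} [DecidableEq N] [Fintype N]
    (M : Matrix N N ℂ) (h : Even (Fintype.card N)) :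
    (-M).charpoly = (Polynomial.aeval (-X : ℂ[X])) M.charpoly := by
  have hmap : (charmatrix M).map (Polynomial.aeval (-X : ℂ[X])).toRingHom
      = -(charmatrix (-M)) := by
    ext i j
    by_cases hij : i = j
    · subst hij
      simp [charmatrix_apply, Polynomial.algebraMap_eq]
      ring
    · simp [charmatrix_apply, Matrix.diagonal_apply_ne _ hij, Polynomial.algebraMap_eq]
  have hdet := RingHom.map_det (Polynomial.aeval (-X : ℂ[X])).toRingHom (charmatrix M)
  rw [Matrix.charpoly, Matrix.charpoly]
  calc (charmatrix (-M)).det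
      = ((-1 : ℂ[X]) ^ Fintype.card N) * (-(charmatrix (-M))).det := by
        rw [Matrix.det_neg, ← mul_assoc, ← mul_pow]
        simp
    _ = (-(charmatrix (-M))).det := by rw [Even.neg_one_pow h, one_mul]
    _ = ((charmatrix M).map (Polynomial.aeval (-X : ℂ[X])).toRingHom).det := by rw [hmap]
    _ = (Polynomial.aeval (-X : ℂ[X])) (charmatrix M).det := by
        rw [show ((Polynomial.aeval (-X : ℂ[X])) (charmatrix M).det)
            = ((Polynomial.aeval (-X : ℂ[X])).toRingHom (charmatrix M).det) from rfl, hdet,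
          RingHom.mapMatrix_apply]

end SpecSymAux

open SpecSymAux

open Polynomial in
/-- `Ĥ(𝐤; γ, u)` is unitarily equivalent to `−Ĥ(𝐤; γ, u)`; consequently,
if `E₁ ≤ … ≤ E_{2m}` are its eigenvalues listed with multiplicity (encoded by the
factorization of the characteristic polynomial together with monotonicity), then
`E_{2m+1−j} = −E_j` for all `j`. -/
theorem spectrum_symmetric (m : ℕ) (hm : 2 ≤ m) (γ u kx ky : ℝ) :
    (∃ U : Matrix (Fin (2 * m)) (Fin (2 * m)) ℂ,
      U ∈ Matrix.unitaryGroup (Fin (2 * m)) ℂ ∧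
      star U * Hbulk m γ u kx ky * U = -(Hbulk m γ u kx ky)) ∧
    ∀ E : Fin (2 * m) → ℝ, Monotone E →
      (Hbulk m γ u kx ky).charpoly = ∏ j : Fin (2 * m), (X - C ((E j : ℂ))) →
      ∀ j : Fin (2 * m), E (Fin.rev j) = -(E j) := by
  set H := Hbulk m γ u kx ky with hHdef
  set V := sgnRev (2 * m) with hVdef
  have hkey : V * Hᵀ * star V = -H := by
    rw [hVdef, sgnRev_conj]
    ext i j
    simp only [Matrix.of_apply, Matrix.neg_apply, Matrix.transpose_apply]
    exact Hbulk_rev m γ u kx ky i j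
  have hherm : H.IsHermitian := Hbulk_isHermitian m γ u kx ky
  have hVst : star V * V = 1 := star_sgnRev_mul
  have hVst' : V * star V = 1 := sgnRev_mul_star
  constructor
  · set W : Matrix (Fin (2 * m)) (Fin (2 * m)) ℂ :=
      (hherm.eigenvectorUnitary : Matrix (Fin (2 * m)) (Fin (2 * m)) ℂ) with hW
    have hWmem : W ∈ Matrix.unitaryGroup (Fin (2 * m)) ℂ := by
      rw [hW]; exact SetLike.coe_mem _
    have hW1 : W * star W = 1 := Matrix.mem_unitaryGroup_iff.mp hWmem
    have hW2 : star W * W = 1 := Matrix.mem_unitaryGroup_iff'.mp hWmem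
    set D : Matrix (Fin (2 * m)) (Fin (2 * m)) ℂ :=
      Matrix.diagonal (RCLike.ofReal ∘ hherm.eigenvalues) with hD
    have hspec : H = W * D * star W := hherm.spectral_theorem
    have hdiag : star W * H * W = D := by
      simpa [hW, hD] using hherm.conjStarAlgAut_star_eigenvectorUnitary
    have hstar : star (W * Wᵀ * star V) = V * (star W)ᵀ * star W := by
      have h1 : star (Wᵀ) = (star W)ᵀ := by
        ext i j
        simp [Matrix.star_apply, Matrix.transpose_apply]
      rw [Matrix.star_mul, Matrix.star_mul, star_star, h1, mul_assoc]
    refine ⟨W * Wᵀ * star V, ?_, ?_⟩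
    · rw [Matrix.mem_unitaryGroup_iff]
      calc W * Wᵀ * star V * star (W * Wᵀ * star V)
          = W * Wᵀ * star V * (V * (star W)ᵀ * star W) := by rw [hstar]
        _ = W * (Wᵀ * ((star V * V) * ((star W)ᵀ * star W))) := by
            simp only [Matrix.mul_assoc]
        _ = W * (Wᵀ * ((star W)ᵀ * star W)) := by rw [hVst, Matrix.one_mul]
        _ = W * ((star W * W)ᵀ * star W) := by
            rw [Matrix.transpose_mul]; simp only [Matrix.mul_assoc]
        _ = 1 := by rw [hW2, Matrix.transpose_one, Matrix.one_mul, hW1]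
    · have hHt : Hᵀ = (star W)ᵀ * D * Wᵀ := by
        rw [hspec, Matrix.transpose_mul, Matrix.transpose_mul, Matrix.diagonal_transpose]
        simp only [Matrix.mul_assoc]
        rfl
      rw [hstar]
      calc V * (star W)ᵀ * star W * H * (W * Wᵀ * star V)
          = V * ((star W)ᵀ * ((star W * H * W) * (Wᵀ * star V))) := by
            simp only [Matrix.mul_assoc]
        _ = V * ((star W)ᵀ * (D * (Wᵀ * star V))) := by rw [hdiag]
        _ = V * Hᵀ * star V := by rw [hHt]; simp only [Matrix.mul_assoc]
        _ = -H := hkey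
  · intro E hE hfact j
    have hcp : (-H).charpoly = H.charpoly := by
      rw [← hkey, charpoly_unitary_conjugate _ _ hVst', charpoly_transpose']
    have hcard : Even (Fintype.card (Fin (2 * m))) := by
      simp only [Fintype.card_fin]
      exact even_two_mul m
    have hneg : (-H).charpoly = ∏ i : Fin (2 * m), (X - C ((-(E i) : ℝ) : ℂ)) := by
      rw [charpoly_neg_even _ hcard, hfact, map_prod]
      have hterm : ∀ i : Fin (2 * m),
          (Polynomial.aeval (-X : ℂ[X])) (X - C ((E i : ℂ)))
            = (-1 : ℂ[X]) * (X - C ((-(E i) : ℝ) : ℂ)) := by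
        intro i
        rw [map_sub, Polynomial.aeval_X, Polynomial.aeval_C, Polynomial.algebraMap_eq,
          Complex.ofReal_neg, map_neg]
        ring
      rw [Finset.prod_congr rfl fun i _ => hterm i, Finset.prod_mul_distrib,
        Finset.prod_const, Finset.card_univ, Even.neg_one_pow hcard, one_mul]
    have hprod : (∏ i : Fin (2 * m), (X - C ((E i : ℂ))))
        = ∏ i : Fin (2 * m), (X - C ((-(E i) : ℝ) : ℂ)) := by
      rw [← hfact, ← hneg, hcp]
    have hms : (Finset.univ.val.map fun i : Fin (2 * m) => ((E i : ℝ) : ℂ))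
        = Finset.univ.val.map fun i : Fin (2 * m) => ((-(E i) : ℝ) : ℂ) := by
      have h1 := Polynomial.roots_multiset_prod_X_sub_C
        (Finset.univ.val.map fun i : Fin (2 * m) => ((E i : ℝ) : ℂ))
      have h2 := Polynomial.roots_multiset_prod_X_sub_C
        (Finset.univ.val.map fun i : Fin (2 * m) => ((-(E i) : ℝ) : ℂ))
      rw [← h1, ← h2]
      congr 1
      rw [Multiset.map_map, Multiset.map_map, ← Finset.prod_eq_multiset_prod,
        ← Finset.prod_eq_multiset_prod]
      exact hprod
    have hreal : (Finset.univ.val.map E)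
        = Finset.univ.val.map fun i : Fin (2 * m) => -(E i) := by
      apply Multiset.map_injective Complex.ofReal_injective
      rw [Multiset.map_map, Multiset.map_map]
      exact hms
    set F : Fin (2 * m) → ℝ := fun i => -(E (Fin.rev i)) with hF
    have hFmono : Monotone F := by
      intro a b hab
      have h1 : Fin.rev b ≤ Fin.rev a := Fin.rev_le_rev.mpr hab
      have h2 := hE h1
      simp only [hF]
      linarith
    have hmsF : (Finset.univ.val.map F) = Finset.univ.val.map E := by
      have hrev : (Finset.univ.val.map (Fin.rev : Fin (2 * m) → Fin (2 * m)))
          = Finset.univ.val := by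
        have h := Finset.map_univ_equiv
          (⟨Fin.rev, Fin.rev, Fin.rev_rev, Fin.rev_rev⟩ : Equiv (Fin (2 * m)) (Fin (2 * m)))
        have h2 := congrArg Finset.val h
        rw [Finset.map_val] at h2
        exact h2
      calc Finset.univ.val.map F
          = (Finset.univ.val.map (Fin.rev : Fin (2 * m) → Fin (2 * m))).map
              (fun i => -(E i)) := by rw [Multiset.map_map]; rfl
        _ = Finset.univ.val.map (fun i => -(E i)) := by rw [hrev]
        _ = Finset.univ.val.map E := hreal.symm
    have hofFn : ((List.ofFn F : List ℝ) : Multiset ℝ) = ((List.ofFn E : List ℝ) : Multiset ℝ) := by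
      rw [← Fin.univ_val_map, ← Fin.univ_val_map]
      exact hmsF
    have hperm : (List.ofFn F).Perm (List.ofFn E) := Multiset.coe_eq_coe.mp hofFn
    have hlist : List.ofFn F = List.ofFn E :=
      List.Perm.eq_of_sortedLE hFmono.sortedLE_ofFn hE.sortedLE_ofFn hperm
    have hfun : F = E := List.ofFn_injective hlist
    have hj := congrFun hfun j
    simp only [hF] at hj
    linarith
end

section
/- Let m ≥ 2, let γ > 0, let u ∈ ℝ, and let 𝐤 ∈ ℝ² with 𝐤 ≠ 0. Then all eigenvalues of the 2m×2m Hermitian matrix Ĥ(𝐤; γ, u) are simple; i.e., Ĥ(𝐤; γ, u) has 2m distinct eigenvalues. -/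
open Matrix Complex

open Polynomial

/-- similarity invariance of charpoly -/
lemma charpoly_conj_aux {n : Type*} [Fintype n] [DecidableEq n] {R : Type*} [CommRing R]
    (U V D : Matrix n n R) (hUV : U * V = 1) :
    (U * D * V).charpoly = D.charpoly := by
  have hmap : ∀ M N : Matrix n n R, (M * N).map (C : R →+* R[X]) = M.map C * N.map C := by
    intro M N; exact Matrix.map_mul
  have hone : (1 : Matrix n n R).map (C : R →+* R[X]) = 1 := by
    ext i j; by_cases h : i = j <;> simp [h, Matrix.one_apply]
  have hUV' : (U.map (C : R →+* R[X])) * (V.map C) = 1 := by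
    rw [← hmap, hUV, hone]
  have hcomm : ∀ M : Matrix n n R[X], Commute (Matrix.scalar n (X : R[X])) M := by
    intro M; exact Matrix.scalar_commute _ (fun r => Commute.all _ _) _
  have hcm : charmatrix (U * D * V) =
      (U.map (C : R →+* R[X])) * charmatrix D * (V.map C) := by
    unfold charmatrix
    rw [Matrix.mul_sub, Matrix.sub_mul]
    congr 1
    · rw [← (hcomm (U.map C)).eq, Matrix.mul_assoc, hUV', Matrix.mul_one]
    · simp only [RingHom.mapMatrix_apply]
      rw [hmap, hmap]
  rw [Matrix.charpoly, Matrix.charpoly, hcm, det_mul, det_mul]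
  have : (U.map (C : R →+* R[X])).det * (V.map C).det = 1 := by
    rw [← det_mul, hUV', det_one]
  calc (U.map (C : R →+* R[X])).det * (charmatrix D).det * (V.map C).det
      = (charmatrix D).det * ((U.map (C : R →+* R[X])).det * (V.map C).det) := by ring
    _ = (charmatrix D).det := by rw [this, mul_one]

lemma charpoly_diagonal_aux {n : Type*} [Fintype n] [DecidableEq n] {R : Type*} [CommRing R]
    (d : n → R) : (diagonal d).charpoly = ∏ i, (X - C (d i)) := by
  have : charmatrix (diagonal d) = diagonal fun i => (X : R[X]) - C (d i) := by
    ext i j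
    by_cases h : i = j
    · subst h; simp
    · rw [charmatrix_apply_ne _ _ _ h, diagonal_apply_ne _ h, diagonal_apply_ne _ h,
        map_zero, neg_zero]
  rw [Matrix.charpoly, this, det_diagonal]

/-- tridiagonal eigenvector uniqueness -/
lemma tri_uniq {N : ℕ} (hN : 0 < N) (H : Matrix (Fin N) (Fin N) ℂ)
    (hband : ∀ i j : Fin N, (i : ℕ) + 1 < (j : ℕ) → H i j = 0)
    (hsup : ∀ i j : Fin N, (i : ℕ) + 1 = (j : ℕ) → H i j ≠ 0)
    (lam : ℂ) (x : Fin N → ℂ) (hx : H *ᵥ x = lam • x)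
    (h0 : x ⟨0, hN⟩ = 0) : x = 0 := by
  have key : ∀ n : ℕ, ∀ i : Fin N, (i : ℕ) ≤ n → x i = 0 := by
    intro n
    induction n with
    | zero =>
      intro i hi
      have : i = ⟨0, hN⟩ := Fin.ext (by simpa using Nat.le_zero.mp hi)
      rwa [this]
    | succ n ih =>
      intro i hi
      rcases Nat.lt_or_ge (i : ℕ) (n + 1) with h | h
      · exact ih i (by omega)
      · have hival : (i : ℕ) = n + 1 := by omega
        have hnN : n < N := by omega
        set r : Fin N := ⟨n, hnN⟩ with hr
        have hrv : (r : ℕ) = n := rfl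
        have hrow := congrFun hx r
        have hsum : ∑ j, H r j * x j = H r i * x i := by
          apply Finset.sum_eq_single_of_mem i (Finset.mem_univ i)
          intro b _ hb
          rcases Nat.lt_or_ge n (b : ℕ) with hbn | hbn
          · have hb1 : (b : ℕ) ≠ n + 1 := fun hc => hb (Fin.ext (by omega))
            have : (r : ℕ) + 1 < (b : ℕ) := by omega
            rw [hband r b this, zero_mul]
          · rw [ih b hbn, mul_zero]
        have hxr : x r = 0 := ih r (by omega)
        have hz : H r i * x i = 0 := by
          have hmv : (H *ᵥ x) r = ∑ j, H r j * x j := rfl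
          rw [hmv, hsum] at hrow
          simpa [hxr] using hrow
        have hne := hsup r i (by omega)
        exact (mul_eq_zero.mp hz).resolve_left hne
  funext i
  exact key (i : ℕ) i le_rfl

/-- for `γ > 0` and `𝐤 ≠ 0`, all eigenvalues of the `2m×2m` Hermitian
matrix `Ĥ(𝐤; γ, u)` are simple: its characteristic polynomial (which has `2m` roots
with multiplicity over `ℂ`) has exactly `2m` distinct roots. -/
theorem eigenvalues_simple (m : ℕ) (hm : 2 ≤ m) (γ u kx ky : ℝ)
    (hγ : 0 < γ) (hk : ¬(kx = 0 ∧ ky = 0)) :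
    (Hbulk m γ u kx ky).charpoly.roots.toFinset.card = 2 * m := by
  have hN : 0 < 2 * m := by omega
  set H := Hbulk m γ u kx ky with hHdef
  -- Hermitian
  have hA : H.IsHermitian := by
    show Hᴴ = H
    ext i j
    simp only [conjTranspose_apply, hHdef, Hbulk, Matrix.of_apply]
    by_cases h0 : (j : ℕ) = (i : ℕ)
    · simp [h0, Complex.star_def, Complex.conj_ofReal]
    · by_cases h1 : (j : ℕ) + 1 = (i : ℕ)
      · have h2 : ¬ ((i : ℕ) + 1 = (j : ℕ)) := by omega
        have h3 : ¬ ((i : ℕ) = (j : ℕ)) := by omega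
        simp only [if_neg h0, if_pos h1, if_neg h3, if_neg h2, if_pos h1]
        by_cases he : (j : ℕ) % 2 = 0 <;>
          simp [he, Complex.ext_iff]
      · by_cases h2 : (i : ℕ) + 1 = (j : ℕ)
        · have h3 : ¬ ((i : ℕ) = (j : ℕ)) := by omega
          have h4 : ¬ ((j : ℕ) + 1 = (i : ℕ)) := by omega
          simp only [if_neg h0, if_neg h1, if_pos h2, if_neg h3, if_pos h2]
          by_cases he : (i : ℕ) % 2 = 0 <;>
            simp [he, Complex.ext_iff]
        · have h3 : ¬ ((i : ℕ) = (j : ℕ)) := by omega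
          simp [h0, h1, h2, h3]
  -- band structure
  have hband : ∀ i j : Fin (2 * m), (i : ℕ) + 1 < (j : ℕ) → H i j = 0 := by
    intro i j h
    simp only [hHdef, Hbulk, Matrix.of_apply]
    rw [if_neg (by omega), if_neg (by omega), if_neg (by omega)]
  have hkc : (kx : ℂ) - (ky : ℂ) * Complex.I ≠ 0 := by
    intro h
    rw [Complex.ext_iff] at h
    simp at h
    exact hk ⟨h.1, h.2⟩
  have hγc : ((γ : ℝ) : ℂ) ≠ 0 := by
    simpa using hγ.ne'
  have hsup : ∀ i j : Fin (2 * m), (i : ℕ) + 1 = (j : ℕ) → H i j ≠ 0 := by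
    intro i j h
    simp only [hHdef, Hbulk, Matrix.of_apply]
    rw [if_neg (by omega), if_pos h]
    by_cases he : (i : ℕ) % 2 = 0 <;> simp [he, hkc, hγc]
  -- eigenvalues injective
  have hinj : Function.Injective hA.eigenvalues := by
    intro a b hab
    by_contra hne
    set B := hA.eigenvectorBasis with hB
    have horth := B.orthonormal
    have i0 : Fin (2 * m) := ⟨0, hN⟩
    have smul_conv : ∀ (r : ℝ) (f : Fin (2 * m) → ℂ), r • f = ((r : ℂ)) • f := by
      intro r f; funext i; simp [Complex.real_smul]
    have hv' : H *ᵥ ⇑(B a) = ((hA.eigenvalues a : ℂ)) • ⇑(B a) := by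
      rw [hA.mulVec_eigenvectorBasis a, smul_conv]
    have hw' : H *ᵥ ⇑(B b) = ((hA.eigenvalues a : ℂ)) • ⇑(B b) := by
      rw [hA.mulVec_eigenvectorBasis b, smul_conv, hab]
    by_cases hva : (⇑(B a) : Fin (2 * m) → ℂ) ⟨0, hN⟩ = 0
    · have hz : ⇑(B a) = (0 : Fin (2 * m) → ℂ) :=
        tri_uniq hN H hband hsup _ _ hv' hva
      have : B a = 0 := by
        ext i
        exact congrFun hz i
      exact horth.ne_zero a this
    · set c : ℂ := (⇑(B a) : Fin (2 * m) → ℂ) ⟨0, hN⟩ with hc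
      set d : ℂ := (⇑(B b) : Fin (2 * m) → ℂ) ⟨0, hN⟩ with hd
      have hy : (c • ⇑(B b) - d • ⇑(B a) : Fin (2 * m) → ℂ) = 0 := by
        apply tri_uniq hN H hband hsup ((hA.eigenvalues a : ℂ))
        · rw [Matrix.mulVec_sub, Matrix.mulVec_smul, Matrix.mulVec_smul, hv', hw',
            smul_comm, smul_comm d, smul_sub]
        · simp only [Pi.sub_apply, Pi.smul_apply, smul_eq_mul, ← hc, ← hd]
          ring
      have hY : c • B b - d • B a = 0 := by
        ext i
        have := congrFun hy i
        simpa using this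
      have hinner : (inner ℂ (B a) (c • B b - d • B a) : ℂ) = 0 := by
        rw [hY, inner_zero_right]
      rw [inner_sub_right, inner_smul_right, inner_smul_right, horth.2 hne,
        mul_zero, zero_sub, neg_eq_zero, mul_eq_zero] at hinner
      have hBa1 : (inner ℂ (B a) (B a) : ℂ) = 1 := by
        rw [@inner_self_eq_norm_sq_to_K ℂ]
        simp [horth.1 a]
      rcases hinner with hd0 | h1
      · -- d = 0, hence c • B b = 0, so B b = 0
        have : c • B b = 0 := by
          rw [← hY, hd0, zero_smul, sub_zero]
        rcases smul_eq_zero.mp this with h | h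
        · exact hva (by rw [hc] at h ⊢; exact absurd h (by rw [← hc]; exact hva)) |>.elim
        · exact horth.ne_zero b h
      · rw [hBa1] at h1; exact one_ne_zero h1
  -- charpoly computation
  have hU1 : (hA.eigenvectorUnitary : Matrix (Fin (2 * m)) (Fin (2 * m)) ℂ) *
      star (hA.eigenvectorUnitary : Matrix (Fin (2 * m)) (Fin (2 * m)) ℂ) = 1 :=
    Unitary.coe_mul_star_self _
  have hcp : H.charpoly =
      (diagonal (RCLike.ofReal ∘ hA.eigenvalues) : Matrix (Fin (2 * m)) (Fin (2 * m)) ℂ).charpoly := by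
    conv_lhs => rw [hA.spectral_theorem]
    exact charpoly_conj_aux _ _ _ hU1
  rw [hcp, charpoly_diagonal_aux]
  set f : Fin (2 * m) → ℂ := RCLike.ofReal ∘ hA.eigenvalues with hf
  have hfinj : Function.Injective f := by
    intro a b h
    exact hinj (RCLike.ofReal_injective h)
  have hprod : (∏ i, (X - C (f i))) = ((Finset.univ.val.map f).map fun a => X - C a).prod := by
    rw [Multiset.map_map]
    rfl
  rw [hprod, Polynomial.roots_multiset_prod_X_sub_C]
  rw [Multiset.toFinset_card_of_nodup ((Finset.univ.nodup).map hfinj)]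
  simp
end

section
/- Let m ≥ 2, let γ > 0, let u ∈ ℝ, and let 𝐤 ∈ ℝ² with 𝐤 ≠ 0. Then 0 is not an eigenvalue of Ĥ(𝐤; γ, u) (equivalently det Ĥ(𝐤; γ, u) ≠ 0); in particular there exists E₀ = E₀(γ, u, |𝐤|) > 0 such that the spectrum of Ĥ(𝐤; γ, u) does not intersect the interval (−E₀, E₀). Thus a gap closing at energy 0 can only occur at 𝐤 = 0. -/
open Matrix Complex

noncomputable def Nmat (K g v : ℝ) : Matrix (Fin 2) (Fin 2) ℝ :=
  !![v^2 - K, g*v; -(g*v), -g^2]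

lemma Nmat_transpose (K g v : ℝ) : (Nmat K g v)ᵀ = Nmat K g (-v) := by
  ext i j
  fin_cases i <;> fin_cases j <;> simp [Nmat]

lemma Nmat_det (K g v : ℝ) : (Nmat K g v).det = g^2 * K := by
  simp [Nmat, Matrix.det_fin_two]; ring

noncomputable def Tprod (K g : ℝ) (U : ℕ → ℝ) : ℕ → Matrix (Fin 2) (Fin 2) ℝ
  | 0 => 1
  | n+1 => Nmat K g (U (n+1)) * Tprod K g U n

lemma Tprod_det (K g : ℝ) (U : ℕ → ℝ) (n : ℕ) : (Tprod K g U n).det = (g^2*K)^n := by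
  induction n with
  | zero => simp [Tprod]
  | succ k ih => rw [Tprod, Matrix.det_mul, ih, Nmat_det]; ring

lemma Tprod_eq_list (K g : ℝ) (U : ℕ → ℝ) (n : ℕ) :
    Tprod K g U n = (((List.range n).map (fun j => Nmat K g (U (j+1)))).reverse).prod := by
  induction n with
  | zero => simp [Tprod]
  | succ k ih => rw [Tprod, List.range_succ, List.map_append, List.reverse_append]; simp [ih]

lemma map_range_reverse {α : Type*} (f : ℕ → α) (n : ℕ) :
    ((List.range n).map f).reverse = (List.range n).map (fun j => f (n - 1 - j)) := by
  induction n generalizing f with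
  | zero => simp
  | succ k ih =>
    conv_lhs => rw [List.range_succ_eq_map]
    conv_rhs => rw [List.range_succ]
    simp only [List.map_cons, List.reverse_cons, List.map_map, List.map_append]
    rw [ih]
    congr 1
    · apply List.map_congr_left
      intro a ha
      have := List.mem_range.mp ha
      simp only [Function.comp]
      congr 1
      omega
    · simp

lemma Tprod_symm (K g : ℝ) (U : ℕ → ℝ) (m : ℕ)
    (hU : ∀ j, 1 ≤ j → j ≤ m → U j + U (m+1-j) = 0) :
    (Tprod K g U m)ᵀ = Tprod K g U m := by
  have key : ∀ j, j ∈ List.range m → (Nmat K g (U (j+1)))ᵀ = Nmat K g (U (m - j)) := by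
    intro j hj
    have hj' := List.mem_range.mp hj
    rw [Nmat_transpose]
    have h1 := hU (j+1) (by omega) (by omega)
    have hmj : m + 1 - (j+1) = m - j := by omega
    rw [hmj] at h1
    have h2 : -U (j+1) = U (m - j) := by linarith
    rw [h2]
  rw [Tprod_eq_list]
  rw [Matrix.transpose_list_prod]
  rw [List.map_reverse, List.reverse_reverse]
  rw [map_range_reverse]
  apply congrArg
  rw [List.map_map]
  apply List.map_congr_left
  intro j hj
  have hj' := List.mem_range.mp hj
  simp only [Function.comp]
  rw [key j hj]
  have h3 : m - 1 - j + 1 = m - j := by omega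
  rw [h3]

lemma Tprod_00_ne (K g : ℝ) (U : ℕ → ℝ) (m : ℕ) (hK : 0 < K) (hg : g ≠ 0)
    (hU : ∀ j, 1 ≤ j → j ≤ m → U j + U (m+1-j) = 0) :
    Tprod K g U m 0 0 ≠ 0 := by
  have hsymm := Tprod_symm K g U m hU
  have h01 : Tprod K g U m 0 1 = Tprod K g U m 1 0 := by
    conv_lhs => rw [← hsymm]
    rfl
  have hdet := Tprod_det K g U m
  rw [Matrix.det_fin_two] at hdet
  intro h0
  rw [h0, h01] at hdet
  have hpos : (0:ℝ) < (g^2*K)^m + Tprod K g U m 1 0 * Tprod K g U m 1 0 := by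
    have : (0:ℝ) < (g^2*K)^m := by positivity
    nlinarith
  rw [zero_mul] at hdet
  nlinarith

lemma Tprod_succ_00 (K g : ℝ) (U : ℕ → ℝ) (n : ℕ) :
    Tprod K g U (n+1) 0 0
      = (U (n+1)^2 - K) * Tprod K g U n 0 0 + g * U (n+1) * Tprod K g U n 1 0 := by
  show (Nmat K g (U (n+1)) * Tprod K g U n) 0 0 = _
  rw [Matrix.mul_apply, Fin.sum_univ_two]
  simp [Nmat]

lemma Tprod_succ_10 (K g : ℝ) (U : ℕ → ℝ) (n : ℕ) :
    Tprod K g U (n+1) 1 0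
      = -(g * U (n+1)) * Tprod K g U n 0 0 - g^2 * Tprod K g U n 1 0 := by
  show (Nmat K g (U (n+1)) * Tprod K g U n) 1 0 = _
  rw [Matrix.mul_apply, Fin.sum_univ_two]
  simp [Nmat]
  ring

lemma sum_ite_coe {N : ℕ} (t : ℕ) (c : ℂ) (ψ : Fin N → ℂ) :
    (∑ j : Fin N, (if (j : ℕ) = t then c else 0) * ψ j)
      = if h : t < N then c * ψ ⟨t, h⟩ else 0 := by
  split
  · next h =>
    rw [Finset.sum_eq_single (⟨t, h⟩ : Fin N)]
    · simp
    · intro j _ hj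
      rw [if_neg, zero_mul]
      intro hc
      exact hj (Fin.ext hc)
    · intro hj; exact absurd (Finset.mem_univ _) hj
  · next h =>
    apply Finset.sum_eq_zero
    intro j _
    rw [if_neg, zero_mul]
    have := j.isLt
    omega

lemma Hbulk_apply (m : ℕ) (γ u kx ky : ℝ) (i j : Fin (2*m)) :
    Hbulk m γ u kx ky i j =
      (if (j : ℕ) = (i : ℕ) then ((layerPot m u ((i : ℕ) / 2 + 1) : ℝ) : ℂ) else 0)
      + (if (j : ℕ) = (i : ℕ) + 1 then
          (if (i : ℕ) % 2 = 0 then ((kx : ℂ) - (ky : ℂ) * Complex.I) else ((γ : ℝ) : ℂ)) else 0)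
      + (if (j : ℕ) + 1 = (i : ℕ) then
          (if (i : ℕ) % 2 = 1 then ((kx : ℂ) + (ky : ℂ) * Complex.I) else ((γ : ℝ) : ℂ)) else 0) := by
  simp only [Hbulk, Matrix.of_apply]
  split_ifs <;> first | (exfalso; omega) | simp

lemma Hbulk_mulVec (m : ℕ) (γ u kx ky : ℝ) (ψ : Fin (2*m) → ℂ) (i : Fin (2*m)) :
    (Hbulk m γ u kx ky *ᵥ ψ) i =
      ((layerPot m u ((i : ℕ) / 2 + 1) : ℝ) : ℂ) * ψ i
      + (if h : (i : ℕ) + 1 < 2*m then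
          (if (i : ℕ) % 2 = 0 then ((kx : ℂ) - (ky : ℂ) * Complex.I) else ((γ : ℝ) : ℂ))
            * ψ ⟨(i : ℕ) + 1, h⟩ else 0)
      + (if h : 1 ≤ (i : ℕ) then
          (if (i : ℕ) % 2 = 1 then ((kx : ℂ) + (ky : ℂ) * Complex.I) else ((γ : ℝ) : ℂ))
            * ψ ⟨(i : ℕ) - 1, by omega⟩ else 0) := by
  have : (Hbulk m γ u kx ky *ᵥ ψ) i = ∑ j, Hbulk m γ u kx ky i j * ψ j := rfl
  rw [this]
  have hsplit : ∀ j : Fin (2*m), Hbulk m γ u kx ky i j * ψ j =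
      (if (j : ℕ) = (i : ℕ) then ((layerPot m u ((i : ℕ) / 2 + 1) : ℝ) : ℂ) else 0) * ψ j
      + (if (j : ℕ) = (i : ℕ) + 1 then
          (if (i : ℕ) % 2 = 0 then ((kx : ℂ) - (ky : ℂ) * Complex.I) else ((γ : ℝ) : ℂ)) else 0) * ψ j
      + (if (j : ℕ) + 1 = (i : ℕ) then
          (if (i : ℕ) % 2 = 1 then ((kx : ℂ) + (ky : ℂ) * Complex.I) else ((γ : ℝ) : ℂ)) else 0) * ψ j := by
    intro j
    rw [Hbulk_apply]
    ring
  simp only [hsplit]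
  rw [Finset.sum_add_distrib, Finset.sum_add_distrib]
  have e1 : (∑ j : Fin (2*m),
      (if (j : ℕ) = (i : ℕ) then ((layerPot m u ((i : ℕ) / 2 + 1) : ℝ) : ℂ) else 0) * ψ j)
      = ((layerPot m u ((i : ℕ) / 2 + 1) : ℝ) : ℂ) * ψ i := by
    rw [sum_ite_coe, dif_pos i.isLt]
  have e2 : (∑ j : Fin (2*m),
      (if (j : ℕ) = (i : ℕ) + 1 then
          (if (i : ℕ) % 2 = 0 then ((kx : ℂ) - (ky : ℂ) * Complex.I) else ((γ : ℝ) : ℂ)) else 0) * ψ j)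
      = (if h : (i : ℕ) + 1 < 2*m then
          (if (i : ℕ) % 2 = 0 then ((kx : ℂ) - (ky : ℂ) * Complex.I) else ((γ : ℝ) : ℂ))
            * ψ ⟨(i : ℕ) + 1, h⟩ else 0) := by
    rw [sum_ite_coe]
  have e3 : (∑ j : Fin (2*m),
      (if (j : ℕ) + 1 = (i : ℕ) then
          (if (i : ℕ) % 2 = 1 then ((kx : ℂ) + (ky : ℂ) * Complex.I) else ((γ : ℝ) : ℂ)) else 0) * ψ j)
      = (if h : 1 ≤ (i : ℕ) then
          (if (i : ℕ) % 2 = 1 then ((kx : ℂ) + (ky : ℂ) * Complex.I) else ((γ : ℝ) : ℂ))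
            * ψ ⟨(i : ℕ) - 1, by omega⟩ else 0) := by
    by_cases h : 1 ≤ (i : ℕ)
    · have hiff : ∀ j : Fin (2*m), ((j : ℕ) + 1 = (i : ℕ)) = ((j : ℕ) = (i : ℕ) - 1) := by
        intro j; apply propext; omega
      simp only [hiff]
      rw [sum_ite_coe, dif_pos (show (i : ℕ) - 1 < 2*m by omega), dif_pos h]
    · rw [dif_neg h]
      apply Finset.sum_eq_zero
      intro j _
      rw [if_neg (by omega), zero_mul]
  rw [e1, e2, e3]

lemma layerPot_antisymm (m : ℕ) (u : ℝ) :
    ∀ j, 1 ≤ j → j ≤ m → layerPot m u j + layerPot m u (m+1-j) = 0 := by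
  intro j h1 h2
  unfold layerPot
  have hc : ((m+1-j : ℕ) : ℝ) = (m : ℝ) + 1 - (j : ℝ) := by
    have : j ≤ m + 1 := by omega
    push_cast [Nat.cast_sub this]
    ring
  rw [hc]
  ring

/-- for `γ > 0` and `𝐤 ≠ 0`, `0` is not an eigenvalue of `Ĥ(𝐤; γ, u)`
(`det Ĥ ≠ 0`), and there is `E₀ > 0` such that the spectrum does not intersect
`(−E₀, E₀)`: gap closing at energy `0` can only occur at `𝐤 = 0`. -/
theorem no_gap_closing_away_from_zero (m : ℕ) (hm : 2 ≤ m) (γ u kx ky : ℝ)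
    (hγ : 0 < γ) (hk : ¬(kx = 0 ∧ ky = 0)) :
    (Hbulk m γ u kx ky).det ≠ 0 ∧
    ∃ E₀ : ℝ, 0 < E₀ ∧
      ∀ z ∈ spectrum ℂ (Hbulk m γ u kx ky), E₀ ≤ ‖z‖ := by
  have hK : 0 < kx^2 + ky^2 := by
    rcases not_and_or.mp hk with h | h
    · have : 0 < kx^2 := by positivity
      nlinarith [sq_nonneg ky]
    · have : 0 < ky^2 := by positivity
      nlinarith [sq_nonneg kx]
  set K : ℝ := kx^2 + ky^2 with hKdef
  set κb : ℂ := (kx:ℂ) - (ky:ℂ) * Complex.I with hκbdef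
  set κ : ℂ := (kx:ℂ) + (ky:ℂ) * Complex.I with hκdef
  have hKc : κ * κb = ((K : ℝ) : ℂ) := by
    rw [hκdef, hκbdef, hKdef]
    push_cast
    ring_nf
    rw [Complex.I_sq]
    ring
  have hKcne : ((K : ℝ) : ℂ) ≠ 0 := by
    exact_mod_cast ne_of_gt hK
  have hκbne : κb ≠ 0 := by
    intro h
    rw [h, mul_zero] at hKc
    exact hKcne hKc.symm
  have hγc : ((γ:ℝ):ℂ) ≠ 0 := by exact_mod_cast ne_of_gt hγ
  have hdet : (Hbulk m γ u kx ky).det ≠ 0 := by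
    intro hdet0
    obtain ⟨ψ, hψne, hψ0⟩ := Matrix.exists_mulVec_eq_zero_iff.mpr hdet0
    set X : ℕ → ℂ := fun i => if h : i < 2*m then ψ ⟨i, h⟩ else 0 with hXdef
    set A : ℕ → ℂ := fun n => X (2*n) with hAdef
    set B : ℕ → ℂ := fun n => if n = 0 then 0 else X (2*n - 1) with hBdef
    have hB0 : B 0 = 0 := by simp [hBdef]
    have hBsucc : ∀ k, B (k+1) = X (2*k+1) := by
      intro k
      simp only [hBdef]
      rw [if_neg (Nat.succ_ne_zero k)]
      congr 1
    have hXin : ∀ (i : ℕ) (h : i < 2*m), X i = ψ ⟨i, h⟩ := by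
      intro i h
      simp only [hXdef]
      rw [dif_pos h]
    have hXout : ∀ (i : ℕ), 2*m ≤ i → X i = 0 := by
      intro i h
      simp only [hXdef]
      rw [dif_neg (by omega)]
    -- the two families of scalar equations
    have hE1 : ∀ n, n < m →
        ((layerPot m u (n+1) : ℝ) : ℂ) * A n + κb * B (n+1) + ((γ:ℝ):ℂ) * B n = 0 := by
      intro n hn
      have hr := congrFun hψ0 (⟨2*n, by omega⟩ : Fin (2*m))
      rw [Hbulk_mulVec] at hr
      simp only [Pi.zero_apply] at hr
      have c1 : 2*n/2 = n := by omega
      have c2 : 2*n % 2 = 0 := by omega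
      simp only [hAdef]
      rw [hXin (2*n) (by omega), hBsucc n, hXin (2*n+1) (by omega)]
      rcases n with _ | k
      · rw [hB0]
        rw [dif_pos (show 2*0+1 < 2*m by omega), dif_neg (by omega)] at hr
        simp only [c1, c2, reduceIte] at hr
        rw [← hκbdef] at hr
        linear_combination hr
      · rw [hBsucc k, hXin (2*k+1) (by omega)]
        rw [dif_pos (show 2*(k+1)+1 < 2*m by omega), dif_pos (show 1 ≤ 2*(k+1) by omega)] at hr
        simp only [c1, c2, reduceIte, if_neg Nat.zero_ne_one] at hr
        have c3 : 2*(k+1) - 1 = 2*k+1 := by omega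
        simp only [c3] at hr
        rw [← hκbdef] at hr
        linear_combination hr
    have hE2 : ∀ n, n < m →
        κ * A n + ((layerPot m u (n+1) : ℝ) : ℂ) * B (n+1) + ((γ:ℝ):ℂ) * A (n+1) = 0 := by
      intro n hn
      have hr := congrFun hψ0 (⟨2*n+1, by omega⟩ : Fin (2*m))
      rw [Hbulk_mulVec] at hr
      simp only [Pi.zero_apply] at hr
      have c1 : (2*n+1)/2 = n := by omega
      have c2 : ¬ ((2*n+1) % 2 = 0) := by omega
      have c3 : (2*n+1) % 2 = 1 := by omega
      have c4 : (2*n+1) - 1 = 2*n := by omega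
      simp only [hAdef]
      rw [hXin (2*n) (by omega), hBsucc n, hXin (2*n+1) (by omega)]
      rw [dif_pos (show 1 ≤ 2*n+1 by omega)] at hr
      simp only [c1, if_neg c2, if_pos c3, c4] at hr
      rw [← hκdef] at hr
      have c6 : 2*(n+1) = 2*n+2 := by omega
      rw [c6]
      by_cases h2 : 2*n+1+1 < 2*m
      · rw [dif_pos h2] at hr
        rw [hXin (2*n+2) (by omega)]
        have c5 : 2*n+1+1 = 2*n+2 := by omega
        simp only [c5] at hr
        linear_combination hr
      · rw [dif_neg h2] at hr
        rw [hXout (2*n+2) (by omega)]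
        linear_combination hr
    -- transfer matrix invariant
    have hInv : ∀ n, n ≤ m →
        (((γ:ℝ):ℂ) * κb)^n * A n
            = ((Tprod K γ (layerPot m u) n 0 0 : ℝ) : ℂ) * A 0
        ∧ (((γ:ℝ):ℂ) * κb)^n * B n
            = ((Tprod K γ (layerPot m u) n 1 0 : ℝ) : ℂ) * A 0 := by
      intro n
      induction n with
      | zero =>
        intro _
        constructor
        · show (((γ:ℝ):ℂ) * κb)^0 * A 0 = (((1 : Matrix (Fin 2) (Fin 2) ℝ) 0 0 : ℝ) : ℂ) * A 0
          rw [Matrix.one_apply_eq]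
          simp
        · show (((γ:ℝ):ℂ) * κb)^0 * B 0 = (((1 : Matrix (Fin 2) (Fin 2) ℝ) 1 0 : ℝ) : ℂ) * A 0
          rw [Matrix.one_apply_ne (by decide)]
          rw [hB0]
          simp
      | succ k ih =>
        intro hk1
        obtain ⟨ih1, ih2⟩ := ih (by omega)
        have hkm : k < m := by omega
        have e1 := hE1 k hkm
        have e2 := hE2 k hkm
        constructor
        · rw [Tprod_succ_00]
          push_cast
          linear_combination ((((γ:ℝ):ℂ) * κb)^k) * κb * e2
            - ((((γ:ℝ):ℂ) * κb)^k) * ((layerPot m u (k+1) : ℝ) : ℂ) * e1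
            - ((((γ:ℝ):ℂ) * κb)^k * A k) * hKc
            + (((layerPot m u (k+1) : ℝ) : ℂ)^2 - ((K:ℝ):ℂ)) * ih1
            + ((γ:ℝ):ℂ) * ((layerPot m u (k+1) : ℝ) : ℂ) * ih2
        · rw [Tprod_succ_10]
          push_cast
          linear_combination ((((γ:ℝ):ℂ) * κb)^k) * ((γ:ℝ):ℂ) * e1
            - ((γ:ℝ):ℂ) * ((layerPot m u (k+1) : ℝ) : ℂ) * ih1
            - ((γ:ℝ):ℂ)^2 * ih2
    -- conclude A 0 = 0
    have hTne : Tprod K γ (layerPot m u) m 0 0 ≠ 0 :=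
      Tprod_00_ne K γ (layerPot m u) m hK (ne_of_gt hγ) (layerPot_antisymm m u)
    have hAm : A m = 0 := by
      simp only [hAdef]
      exact hXout (2*m) le_rfl
    have hfin1 := (hInv m le_rfl).1
    rw [hAm, mul_zero] at hfin1
    have hA0 : A 0 = 0 := by
      rcases mul_eq_zero.mp hfin1.symm with h | h
      · exact absurd h (by exact_mod_cast hTne)
      · exact h
    -- kernel vector vanishes
    have hzero : ∀ n, A n = 0 ∧ B n = 0 := by
      intro n
      induction n with
      | zero => exact ⟨hA0, hB0⟩
      | succ k ih =>
        by_cases hkm : k < m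
        · have e1 := hE1 k hkm
          have e2 := hE2 k hkm
          rw [ih.1, ih.2, mul_zero, mul_zero] at e1
          have hBk1 : B (k+1) = 0 := by
            rcases mul_eq_zero.mp (by linear_combination e1 : κb * B (k+1) = 0) with h | h
            · exact absurd h hκbne
            · exact h
          rw [ih.1, hBk1, mul_zero, mul_zero] at e2
          have hAk1 : A (k+1) = 0 := by
            rcases mul_eq_zero.mp (by linear_combination e2 : ((γ:ℝ):ℂ) * A (k+1) = 0) with h | h
            · exact absurd h hγc
            · exact h
          exact ⟨hAk1, hBk1⟩
        · constructor
          · simp only [hAdef]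
            exact hXout (2*(k+1)) (by omega)
          · rw [hBsucc k]
            exact hXout (2*k+1) (by omega)
    apply hψne
    funext i
    rcases Nat.even_or_odd (i : ℕ) with ⟨t, ht⟩ | ⟨t, ht⟩
    · have h1 := (hzero t).1
      simp only [hAdef] at h1
      rw [hXin (2*t) (by omega)] at h1
      have : (⟨2*t, by omega⟩ : Fin (2*m)) = i := by
        apply Fin.ext
        simp
        omega
      rw [this] at h1
      exact h1
    · have h1 := (hzero (t+1)).2
      rw [hBsucc t] at h1
      rw [hXin (2*t+1) (by omega)] at h1
      have : (⟨2*t+1, by omega⟩ : Fin (2*m)) = i := by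
        apply Fin.ext
        simp
        omega
      rw [this] at h1
      exact h1
  refine ⟨hdet, ?_⟩
  -- spectrum part
  have hfin := Matrix.finite_spectrum (Hbulk m γ u kx ky)
  have h0not : (0:ℂ) ∉ spectrum ℂ (Hbulk m γ u kx ky) := by
    intro hmem
    rw [spectrum.mem_iff] at hmem
    apply hmem
    rw [map_zero, zero_sub, Matrix.isUnit_iff_isUnit_det, Matrix.det_neg]
    have hcard : Fintype.card (Fin (2*m)) = 2*m := Fintype.card_fin _
    rw [hcard]
    have : ((-1:ℂ))^(2*m) = 1 := Even.neg_one_pow ⟨m, by ring⟩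
    rw [this, one_mul]
    exact isUnit_iff_ne_zero.mpr hdet
  classical
  set S : Finset ℝ := insert 1 (Finset.image (fun z : ℂ => ‖z‖) hfin.toFinset) with hSdef
  have hS : S.Nonempty := ⟨1, Finset.mem_insert_self _ _⟩
  refine ⟨S.min' hS, ?_, ?_⟩
  · have hmem := S.min'_mem hS
    rcases Finset.mem_insert.mp hmem with h | h
    · rw [h]; norm_num
    · obtain ⟨z, hz, habs⟩ := Finset.mem_image.mp h
      rw [Set.Finite.mem_toFinset] at hz
      have hzne : z ≠ 0 := fun h0 => h0not (h0 ▸ hz)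
      rw [← habs]
      exact norm_pos_iff.mpr hzne
  · intro z hz
    apply S.min'_le
    exact Finset.mem_insert_of_mem
      (Finset.mem_image.mpr ⟨z, (Set.Finite.mem_toFinset _).mpr hz, rfl⟩)
end

section
/- Let m ≥ 2, γ > 0, and u ≠ 0. Then 0 is an eigenvalue of Ĥ(0; γ, u) (the bulk Hamiltonian at 𝐤 = 0) if and only if there exists j ∈ {1, …, m−1} with u_j u_{j+1} = γ². Equivalently, for u > 0, 0 is an eigenvalue of Ĥ(0; γ, u) if and only if δ(γ, u) = j − m/2 for some integer j with m/2 + 1 ≤ j ≤ m − 1 (where δ(γ,u) = √(γ²(m−1)²/u² + 1/4)). -/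
open Matrix Complex

/-- `δ(γ,u) = √(γ²(m−1)²/u² + 1/4)`. -/
noncomputable def deltaGU (m : ℕ) (γ u : ℝ) : ℝ :=
  Real.sqrt (γ ^ 2 * ((m : ℝ) - 1) ^ 2 / u ^ 2 + 1 / 4)

lemma Hbulk_zero_apply (m : ℕ) (γ u : ℝ) (i j : Fin (2 * m)) :
    Hbulk m γ u 0 0 i j =
      if (i : ℕ) = (j : ℕ) then ((layerPot m u ((i : ℕ) / 2 + 1) : ℝ) : ℂ)
      else if (i : ℕ) + 1 = (j : ℕ) ∧ (i : ℕ) % 2 = 1 then ((γ : ℝ) : ℂ)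
      else if (j : ℕ) + 1 = (i : ℕ) ∧ (j : ℕ) % 2 = 1 then ((γ : ℝ) : ℂ)
      else 0 := by
  simp only [Hbulk, Matrix.of_apply, Complex.ofReal_zero, zero_mul, zero_sub, zero_add, sub_zero,
    neg_zero, zero_mul]
  split_ifs with h1 h2 h3 h4 h5 h6 h7 h8 h9 <;> simp_all <;> omega

lemma mem_spectrum_zero_iff (m : ℕ) (H : Matrix (Fin (2*m)) (Fin (2*m)) ℂ) :
    (0 : ℂ) ∈ spectrum ℂ H ↔ ∃ v, v ≠ 0 ∧ H.mulVec v = 0 := by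
  rw [spectrum.mem_iff, map_zero, zero_sub, Matrix.exists_mulVec_eq_zero_iff]
  constructor
  · intro h
    by_contra hd
    exact h (((Matrix.isUnit_iff_isUnit_det H).2 (isUnit_iff_ne_zero.2 hd)).neg)
  · intro hd h
    have := (Matrix.isUnit_iff_isUnit_det (-H)).1 h
    rw [Matrix.det_neg, hd, mul_zero] at this
    exact this.ne_zero rfl

lemma forward_dir (m : ℕ) (hm : 2 ≤ m) (γ u : ℝ) (hγ : 0 < γ)
    (j : ℕ) (hj1 : 1 ≤ j) (hj2 : j ≤ m - 1)
    (hprod : layerPot m u j * layerPot m u (j + 1) = γ ^ 2) :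
    ∃ v, v ≠ 0 ∧ (Hbulk m γ u 0 0).mulVec v = 0 := by
  have hjm : 2 * j < 2 * m := by omega
  set a : Fin (2 * m) := ⟨2 * j - 1, by omega⟩ with ha
  set b : Fin (2 * m) := ⟨2 * j, by omega⟩ with hb
  have hab : a ≠ b := by
    simp only [ha, hb, Fin.mk.injEq, ne_eq]; omega
  refine ⟨fun k => if (k : ℕ) = 2 * j - 1 then (γ : ℂ)
    else if (k : ℕ) = 2 * j then -((layerPot m u j : ℝ) : ℂ) else 0, ?_, ?_⟩
  · intro h0
    have := congrFun h0 a
    simp only [ha, Pi.zero_apply, if_true] at this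
    exact (Complex.ofReal_ne_zero.2 (ne_of_gt hγ)) this
  · funext i
    simp only [Matrix.mulVec, dotProduct, Pi.zero_apply]
    rw [Finset.sum_eq_add a b hab
      (fun c _ hc => by
        rw [if_neg (fun h => hc.1 (Fin.ext (by simp [ha, h]))),
          if_neg (fun h => hc.2 (Fin.ext (by simp [hb, h]))), mul_zero])
      (fun h => absurd (Finset.mem_univ a) h)
      (fun h => absurd (Finset.mem_univ b) h)]
    rw [Hbulk_zero_apply, Hbulk_zero_apply]
    simp only [ha, hb]
    by_cases hc1 : (i : ℕ) = 2 * j - 1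
    · have e1 : (i : ℕ) / 2 + 1 = j := by omega
      rw [e1] at *
      split_ifs <;> first
        | (exfalso; omega)
        | (push_cast; ring)
    · by_cases hc2 : (i : ℕ) = 2 * j
      · have e2 : (i : ℕ) / 2 + 1 = j + 1 := by omega
        rw [e2] at *
        split_ifs <;> first
          | (exfalso; omega)
          | (push_cast;
             have : ((layerPot m u j : ℝ) : ℂ) * ((layerPot m u (j+1) : ℝ) : ℂ) = ((γ:ℝ):ℂ)^2 := by
               rw [← Complex.ofReal_mul, hprod]; push_cast; ring
             linear_combination -this  )
      · split_ifs <;> first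
          | (exfalso; omega)
          | (push_cast; ring)

lemma layerPot_one (m : ℕ) (hm : 2 ≤ m) (u : ℝ) (hu : u ≠ 0) : layerPot m u 1 ≠ 0 := by
  unfold layerPot
  have h1 : (m : ℝ) - 1 ≠ 0 := by
    have : (2:ℝ) ≤ m := by exact_mod_cast hm
    linarith
  have h2 : (1 : ℝ) - ((m : ℝ) + 1)/2 ≠ 0 := by
    have : (2:ℝ) ≤ m := by exact_mod_cast hm
    intro h; nlinarith
  push_cast
  exact mul_ne_zero (div_ne_zero hu h1) h2

lemma layerPot_m (m : ℕ) (hm : 2 ≤ m) (u : ℝ) (hu : u ≠ 0) : layerPot m u m ≠ 0 := by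
  unfold layerPot
  have h1 : (m : ℝ) - 1 ≠ 0 := by
    have : (2:ℝ) ≤ m := by exact_mod_cast hm
    linarith
  have h2 : (m : ℝ) - ((m : ℝ) + 1)/2 ≠ 0 := by
    have : (2:ℝ) ≤ m := by exact_mod_cast hm
    intro h; nlinarith
  exact mul_ne_zero (div_ne_zero hu h1) h2

lemma backward_dir (m : ℕ) (hm : 2 ≤ m) (γ u : ℝ) (hγ : 0 < γ) (hu : u ≠ 0)
    (v : Fin (2*m) → ℂ) (hv : (Hbulk m γ u 0 0).mulVec v = 0)
    (hno : ∀ j : ℕ, 1 ≤ j → j ≤ m - 1 → layerPot m u j * layerPot m u (j + 1) ≠ γ ^ 2) :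
    v = 0 := by
  have hrow : ∀ r : Fin (2*m), ∑ k, Hbulk m γ u 0 0 r k * v k = 0 := by
    intro r
    have := congrFun hv r
    simpa [Matrix.mulVec, dotProduct] using this
  have hpair : ∀ j : ℕ, 1 ≤ j → j ≤ m - 1 → ∀ (pa : 2*j-1 < 2*m) (pb : 2*j < 2*m),
      v ⟨2*j-1, pa⟩ = 0 ∧ v ⟨2*j, pb⟩ = 0 := by
    intro j hj1 hj2 pa pb
    have hab : (⟨2*j-1, pa⟩ : Fin (2*m)) ≠ ⟨2*j, pb⟩ := by
      simp only [Fin.mk.injEq, ne_eq]; omega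
    have heq1 : ((layerPot m u j : ℝ) : ℂ) * v ⟨2*j-1, pa⟩ + ((γ:ℝ):ℂ) * v ⟨2*j, pb⟩ = 0 := by
      have := hrow ⟨2*j-1, pa⟩
      rw [Finset.sum_eq_add (⟨2*j-1, pa⟩ : Fin (2*m)) (⟨2*j, pb⟩ : Fin (2*m)) hab
        (fun c _ hc => by
          rw [Hbulk_zero_apply]
          have hca : (c:ℕ) ≠ 2*j-1 := fun h => hc.1 (Fin.ext h)
          have hcb : (c:ℕ) ≠ 2*j := fun h => hc.2 (Fin.ext h)
          simp only [Fin.val_mk]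
          split_ifs <;> first | (exfalso; omega) | (rw [zero_mul]))
        (fun h => absurd (Finset.mem_univ _) h)
        (fun h => absurd (Finset.mem_univ _) h)] at this
      rw [Hbulk_zero_apply, Hbulk_zero_apply] at this
      simp only [Fin.val_mk] at this
      have e1 : (2*j-1) / 2 + 1 = j := by omega
      rw [e1] at this
      convert this using 2 <;> split_ifs <;> first | (exfalso; omega) | rfl
    have heq2 : ((γ:ℝ):ℂ) * v ⟨2*j-1, pa⟩ + ((layerPot m u (j+1) : ℝ) : ℂ) * v ⟨2*j, pb⟩ = 0 := by
      have := hrow ⟨2*j, pb⟩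
      rw [Finset.sum_eq_add (⟨2*j-1, pa⟩ : Fin (2*m)) (⟨2*j, pb⟩ : Fin (2*m)) hab
        (fun c _ hc => by
          rw [Hbulk_zero_apply]
          have hca : (c:ℕ) ≠ 2*j-1 := fun h => hc.1 (Fin.ext h)
          have hcb : (c:ℕ) ≠ 2*j := fun h => hc.2 (Fin.ext h)
          simp only [Fin.val_mk]
          split_ifs <;> first | (exfalso; omega) | (rw [zero_mul]))
        (fun h => absurd (Finset.mem_univ _) h)
        (fun h => absurd (Finset.mem_univ _) h)] at this
      rw [Hbulk_zero_apply, Hbulk_zero_apply] at this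
      simp only [Fin.val_mk] at this
      have e1 : (2*j) / 2 + 1 = j + 1 := by omega
      rw [e1] at this
      convert this using 2 <;> split_ifs <;> first | (exfalso; omega) | rfl
    have hdet : ((layerPot m u j : ℝ) : ℂ) * ((layerPot m u (j+1) : ℝ) : ℂ) - ((γ:ℝ):ℂ)^2 ≠ 0 := by
      intro h
      apply hno j hj1 hj2
      have : ((layerPot m u j * layerPot m u (j+1) : ℝ) : ℂ) = ((γ^2 : ℝ) : ℂ) := by
        push_cast
        linear_combination h
      exact_mod_cast this
    have hva : v ⟨2*j-1, pa⟩ = 0 := by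
      have h3 : (((layerPot m u j : ℝ) : ℂ) * ((layerPot m u (j+1) : ℝ) : ℂ) - ((γ:ℝ):ℂ)^2) * v ⟨2*j-1, pa⟩ = 0 := by
        linear_combination ((layerPot m u (j+1) : ℝ) : ℂ) * heq1 - ((γ:ℝ):ℂ) * heq2
      exact (mul_eq_zero.1 h3).resolve_left hdet
    have hvb : v ⟨2*j, pb⟩ = 0 := by
      have hγc : ((γ:ℝ):ℂ) ≠ 0 := Complex.ofReal_ne_zero.2 hγ.ne'
      have h4 : ((γ:ℝ):ℂ) * v ⟨2*j, pb⟩ = 0 := by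
        rw [hva, mul_zero, zero_add] at heq1; exact heq1
      exact (mul_eq_zero.1 h4).resolve_left hγc
    exact ⟨hva, hvb⟩
  funext k
  rcases Nat.eq_zero_or_pos (k : ℕ) with hk0 | hkpos
  · have := hrow k
    rw [Finset.sum_eq_single k
      (fun c _ hc => by
        rw [Hbulk_zero_apply]
        have hck : (c:ℕ) ≠ (k:ℕ) := fun h => hc (Fin.ext h)
        split_ifs <;> first | (exfalso; omega) | (rw [zero_mul]))
      (fun h => absurd (Finset.mem_univ k) h)] at this
    rw [Hbulk_zero_apply, if_pos rfl] at this
    have e1 : (k:ℕ)/2 + 1 = 1 := by omega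
    rw [e1] at this
    have := (mul_eq_zero.1 this).resolve_left (Complex.ofReal_ne_zero.2 (layerPot_one m hm u hu))
    simpa using this
  · rcases Nat.lt_or_ge (k:ℕ) (2*m-1) with hklt | hke
    · rcases Nat.even_or_odd (k:ℕ) with he | ho
      · obtain ⟨j, hj⟩ := he
        have hj' : (k:ℕ) = 2*j := by omega
        have h1 : 1 ≤ j := by omega
        have h2 : j ≤ m - 1 := by omega
        have := (hpair j h1 h2 (by omega) (by omega)).2
        have hk : k = (⟨2*j, by omega⟩ : Fin (2*m)) := Fin.ext hj'
        rw [hk]; simpa using this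
      · obtain ⟨j, hj⟩ := ho
        have hj' : (k:ℕ) = 2*(j+1)-1 := by omega
        have h1 : 1 ≤ j + 1 := by omega
        have h2 : j + 1 ≤ m - 1 := by omega
        have := (hpair (j+1) h1 h2 (by omega) (by omega)).1
        have hk : k = (⟨2*(j+1)-1, by omega⟩ : Fin (2*m)) := Fin.ext hj'
        rw [hk]; simpa using this
    · have hk : (k:ℕ) = 2*m-1 := by omega
      have := hrow k
      rw [Finset.sum_eq_single k
        (fun c _ hc => by
          rw [Hbulk_zero_apply]
          have hck : (c:ℕ) ≠ (k:ℕ) := fun h => hc (Fin.ext h)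
          split_ifs <;> first | (exfalso; omega) | (rw [zero_mul]))
        (fun h => absurd (Finset.mem_univ k) h)] at this
      rw [Hbulk_zero_apply, if_pos rfl] at this
      have e1 : (k:ℕ)/2 + 1 = m := by omega
      rw [e1] at this
      have := (mul_eq_zero.1 this).resolve_left (Complex.ofReal_ne_zero.2 (layerPot_m m hm u hu))
      simpa using this

lemma delta_equiv (m : ℕ) (hm : 2 ≤ m) (γ u : ℝ) (hγ : 0 < γ) (hu : u ≠ 0) :
    (∃ j : ℕ, 1 ≤ j ∧ j ≤ m - 1 ∧ layerPot m u j * layerPot m u (j + 1) = γ ^ 2) ↔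
    (∃ j : ℕ, (m : ℝ) / 2 + 1 ≤ (j : ℝ) ∧ (j : ℝ) ≤ (m : ℝ) - 1 ∧
      deltaGU m γ u = (j : ℝ) - (m : ℝ) / 2) := by
  have hmr : (2:ℝ) ≤ (m:ℝ) := by exact_mod_cast hm
  have hm1 : (m:ℝ) - 1 ≠ 0 := by linarith
  have hdnn : 0 ≤ deltaGU m γ u := Real.sqrt_nonneg _
  have hd2 : (deltaGU m γ u)^2 = γ^2*((m:ℝ)-1)^2/u^2 + 1/4 :=
    Real.sq_sqrt (by positivity)
  have h0 : 0 < γ^2*((m:ℝ)-1)^2/u^2 := by positivity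
  have hdpos : 1/2 < deltaGU m γ u := by nlinarith [hd2, hdnn, h0]
  have hc : (u/((m:ℝ)-1))^2 ≠ 0 := pow_ne_zero _ (div_ne_zero hu hm1)
  have hce : (u/((m:ℝ)-1))^2 * ((deltaGU m γ u)^2 - 1/4) = γ^2 := by
    rw [hd2]; field_simp; ring
  have hiff : ∀ j : ℕ, (layerPot m u j * layerPot m u (j+1) = γ^2 ↔
      ((j:ℝ) - (m:ℝ)/2)^2 = (deltaGU m γ u)^2) := by
    intro j
    have hkey : layerPot m u j * layerPot m u (j+1)
        = (u/((m:ℝ)-1))^2 * (((j:ℝ)-(m:ℝ)/2)^2 - 1/4) := by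
      unfold layerPot; push_cast; ring
    rw [hkey, ← hce, mul_right_inj' hc]
    constructor <;> intro h <;> linarith
  constructor
  · rintro ⟨j, hj1, hj2, hj3⟩
    have hjr : (j:ℝ) ≤ (m:ℝ) - 1 := by
      have : (j:ℝ) + 1 ≤ (m:ℝ) := by exact_mod_cast (by omega : j + 1 ≤ m)
      linarith
    have hsq := (hiff j).1 hj3
    have habs : |(j:ℝ) - (m:ℝ)/2| = deltaGU m γ u := by
      rw [← Real.sqrt_sq_eq_abs, hsq, Real.sqrt_sq hdnn]
    rcases (abs_eq hdnn).1 habs with hcase | hcase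
    · refine ⟨j, ?_, hjr, hcase.symm⟩
      have h1 : (m:ℝ) + 1 < 2*(j:ℝ) := by linarith
      have h2 : m + 1 < 2*j := by exact_mod_cast h1
      have h3 : m + 2 ≤ 2*j := by omega
      have : (m:ℝ) + 2 ≤ 2*(j:ℝ) := by exact_mod_cast h3
      linarith
    · refine ⟨m - j, ?_, ?_, ?_⟩ <;> rw [Nat.cast_sub (by omega : j ≤ m)]
      · have h1 : 2*(j:ℝ) + 1 < (m:ℝ) := by linarith
        have h2 : 2*j + 1 < m := by exact_mod_cast h1
        have h3 : 2*j + 2 ≤ m := by omega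
        have : 2*(j:ℝ) + 2 ≤ (m:ℝ) := by exact_mod_cast h3
        linarith
      · have : (1:ℝ) ≤ (j:ℝ) := by exact_mod_cast hj1
        linarith
      · linarith
  · rintro ⟨j, hj1, hj2, hj3⟩
    refine ⟨j, ?_, ?_, (hiff j).2 (by rw [hj3])⟩
    · have : (1:ℝ) ≤ (j:ℝ) := by linarith
      exact_mod_cast this
    · have : (j:ℝ) + 1 ≤ (m:ℝ) := by linarith
      have : j + 1 ≤ m := by exact_mod_cast this
      omega

/-- for `γ > 0`, `u ≠ 0`, `0` is an eigenvalue of `Ĥ(0; γ, u)` iff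
`u_j u_{j+1} = γ²` for some `1 ≤ j ≤ m−1`; equivalently, for `u > 0`, iff
`δ(γ, u) = j − m/2` for some integer `j` with `m/2 + 1 ≤ j ≤ m − 1`. -/
theorem zero_eigenvalue_criterion (m : ℕ) (hm : 2 ≤ m) (γ u : ℝ)
    (hγ : 0 < γ) (hu : u ≠ 0) :
    ((0 : ℂ) ∈ spectrum ℂ (Hbulk m γ u 0 0) ↔
      ∃ j : ℕ, 1 ≤ j ∧ j ≤ m - 1 ∧ layerPot m u j * layerPot m u (j + 1) = γ ^ 2) ∧
    (0 < u →
      ((0 : ℂ) ∈ spectrum ℂ (Hbulk m γ u 0 0) ↔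
        ∃ j : ℕ, (m : ℝ) / 2 + 1 ≤ (j : ℝ) ∧ (j : ℝ) ≤ (m : ℝ) - 1 ∧
          deltaGU m γ u = (j : ℝ) - (m : ℝ) / 2)) := by
  have main : (0:ℂ) ∈ spectrum ℂ (Hbulk m γ u 0 0) ↔
      ∃ j : ℕ, 1 ≤ j ∧ j ≤ m - 1 ∧ layerPot m u j * layerPot m u (j + 1) = γ ^ 2 := by
    rw [mem_spectrum_zero_iff]
    constructor
    · rintro ⟨v, hv0, hv⟩
      by_contra hno
      push_neg at hno
      exact hv0 (backward_dir m hm γ u hγ hu v hv fun j h1 h2 => hno j h1 h2)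
    · rintro ⟨j, h1, h2, h3⟩
      exact forward_dir m hm γ u hγ j h1 h2 h3
  exact ⟨main, fun _ => main.trans (delta_equiv m hm γ u hγ hu)⟩
end
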